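/- Suppose the smooth cost function c satisfies (A1), (A2), and (A3) with some constant c₀ > 0 at every pair (x,y) ∈ ℝⁿ × ℝⁿ. Let Ω ⊂ ℝⁿ be a bounded domain with C² boundary that is c-convex with respect to a bounded domain Ω* ⊂ ℝⁿ, i.e. {D_y c(x,y) : x ∈ Ω} is convex for each y ∈ Ω*. For y₀, y₁ in the closure of Ω* and a ∈ ℝ, set U_{y₀,y₁,a} = {x ∈ ℝⁿ : c(x,y₀) < c(x,y₁) + a}. Then Ω equals the intersection of all sets U_{y₀,y₁,a}, taken over all y₀, y₁ in the closure of Ω* and all a ∈ ℝ such that Ω ⊂ U_{y₀,y₁,a}. -/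

import Mathlib

open Set Filter Topology MeasureTheory
open scoped BigOperators

noncomputable section

/-- The partial derivative `∂f/∂x_i` of a function on `ℝⁿ`. -/
def pd {n : ℕ} (i : Fin n) (f : (Fin n → ℝ) → ℝ) (x : Fin n → ℝ) : ℝ :=
  fderiv ℝ f x (Pi.single i 1)

/-- `D_x c (x, y)`, the gradient of the cost function in the `x`-variable. -/
def Dx {n : ℕ} (c : (Fin n → ℝ) → (Fin n → ℝ) → ℝ) (x y : Fin n → ℝ) :
    Fin n → ℝ :=
  fun i => pd i (fun x' => c x' y) x

/-- `D_y c (x, y)`, the gradient of the cost function in the `y`-variable. -/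
def Dy {n : ℕ} (c : (Fin n → ℝ) → (Fin n → ℝ) → ℝ) (x y : Fin n → ℝ) :
    Fin n → ℝ :=
  fun j => pd j (fun y' => c x y') y

/-- The mixed Hessian matrix `c_{i,j} = ∂²c/∂x_i∂y_j`. -/
def mixHess {n : ℕ} (c : (Fin n → ℝ) → (Fin n → ℝ) → ℝ) (x y : Fin n → ℝ) :
    Matrix (Fin n) (Fin n) ℝ :=
  Matrix.of fun i j => pd j (fun y' => Dx c x y' i) y

/-- The inverse mixed Hessian `(c^{i,j})`. -/
def mixInv {n : ℕ} (c : (Fin n → ℝ) → (Fin n → ℝ) → ℝ) (x y : Fin n → ℝ) :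
    Matrix (Fin n) (Fin n) ℝ :=
  (mixHess c x y)⁻¹

/-- `c_{ij} = ∂²c/∂x_i∂x_j`. -/
def cxx {n : ℕ} (c : (Fin n → ℝ) → (Fin n → ℝ) → ℝ) (x y : Fin n → ℝ)
    (i j : Fin n) : ℝ :=
  pd i (fun x' => Dx c x' y j) x

/-- `c_{ij,k} = ∂³c/∂x_i∂x_j∂y_k`. -/
def cxxy {n : ℕ} (c : (Fin n → ℝ) → (Fin n → ℝ) → ℝ) (x y : Fin n → ℝ)
    (i j k : Fin n) : ℝ :=
  pd k (fun y' => cxx c x y' i j) y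

/-- `c_{q,rs} = ∂³c/∂x_q∂y_r∂y_s`. -/
def cxyy {n : ℕ} (c : (Fin n → ℝ) → (Fin n → ℝ) → ℝ) (x y : Fin n → ℝ)
    (q r s : Fin n) : ℝ :=
  pd s (fun y' => pd r (fun y'' => Dx c x y'' q) y') y

/-- `c_{ij,rs} = ∂⁴c/∂x_i∂x_j∂y_r∂y_s`. -/
def cxxyy {n : ℕ} (c : (Fin n → ℝ) → (Fin n → ℝ) → ℝ) (x y : Fin n → ℝ)
    (i j r s : Fin n) : ℝ :=
  pd s (fun y' => cxxy c x y' i j r) y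

/-- The cost function is `C^∞`-smooth (jointly in both variables). -/
def SmoothCost {n : ℕ} (c : (Fin n → ℝ) → (Fin n → ℝ) → ℝ) : Prop :=
  ContDiff ℝ (⊤ : ℕ∞) fun p : (Fin n → ℝ) × (Fin n → ℝ) => c p.1 p.2

/-- Condition (A1): for all `x, z` there is a unique `y` with `D_x c (x,y) = z`,
and for all `y, z` there is a unique `x` with `D_y c (x,y) = z`. -/
def A1 {n : ℕ} (c : (Fin n → ℝ) → (Fin n → ℝ) → ℝ) : Prop :=
  (∀ x z : Fin n → ℝ, ∃! y : Fin n → ℝ, Dx c x y = z) ∧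
  (∀ y z : Fin n → ℝ, ∃! x : Fin n → ℝ, Dy c x y = z)

/-- Condition (A2): the mixed Hessian is nonsingular everywhere. -/
def A2 {n : ℕ} (c : (Fin n → ℝ) → (Fin n → ℝ) → ℝ) : Prop :=
  ∀ x y : Fin n → ℝ, (mixHess c x y).det ≠ 0

/-- Condition (A3) with constant `c₀` at the pair `(x, y)`: for all orthogonal
`ξ, η`, `∑ (c^{p,q} c_{ij,p} c_{q,rs} - c_{ij,rs}) c^{r,k} c^{s,l} ξ_i ξ_j η_k η_l
≥ c₀ |ξ|² |η|²`. -/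
def A3at {n : ℕ} (c : (Fin n → ℝ) → (Fin n → ℝ) → ℝ) (c₀ : ℝ)
    (x y : Fin n → ℝ) : Prop :=
  ∀ ξ η : Fin n → ℝ, (∑ i : Fin n, ξ i * η i) = 0 →
    c₀ * (∑ i : Fin n, ξ i ^ 2) * (∑ i : Fin n, η i ^ 2) ≤
      ∑ i : Fin n, ∑ j : Fin n, ∑ k : Fin n, ∑ l : Fin n, ∑ r : Fin n, ∑ s : Fin n,
        ((∑ p : Fin n, ∑ q : Fin n,
            mixInv c x y p q * cxxy c x y i j p * cxyy c x y q r s)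
          - cxxyy c x y i j r s)
        * mixInv c x y r k * mixInv c x y s l * ξ i * ξ j * η k * η l

/-- `u` is semi-concave on `Ω`: for some `C > 0`, `u - C|x|²` is concave
(along all segments contained in `Ω`). -/
def SemiConcaveOn {n : ℕ} (Ω : Set (Fin n → ℝ)) (u : (Fin n → ℝ) → ℝ) : Prop :=
  ∃ C : ℝ, 0 < C ∧ ∀ x₀ ∈ Ω, ∀ x₁ ∈ Ω,
    (∀ s : ℝ, s ∈ Icc (0 : ℝ) 1 → (1 - s) • x₀ + s • x₁ ∈ Ω) →
    ∀ t ∈ Icc (0 : ℝ) 1,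
      (1 - t) * (u x₀ - C * ∑ i : Fin n, x₀ i ^ 2)
          + t * (u x₁ - C * ∑ i : Fin n, x₁ i ^ 2)
        ≤ u ((1 - t) • x₀ + t • x₁)
            - C * ∑ i : Fin n, ((1 - t) • x₀ + t • x₁) i ^ 2

/-- The supergradient `∂⁺u(x₀)` of `u` (defined on `Ω`) at `x₀`:
`u(x) ≤ u(x₀) + p·(x - x₀) + o(|x - x₀|)`. -/
def superGrad {n : ℕ} (Ω : Set (Fin n → ℝ)) (u : (Fin n → ℝ) → ℝ)
    (x₀ : Fin n → ℝ) : Set (Fin n → ℝ) :=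
  {p | ∀ ε > (0 : ℝ), ∃ δ > (0 : ℝ), ∀ x ∈ Ω, ‖x - x₀‖ < δ →
        u x ≤ u x₀ + (∑ i : Fin n, p i * (x i - x₀ i)) + ε * ‖x - x₀‖}

/-- The `c`-supergradient `∂⁺_c u(x₀)`:
`u(x) ≤ c(x,y) - c(x₀,y) + u(x₀) + o(|x - x₀|)`. -/
def cSuperGrad {n : ℕ} (c : (Fin n → ℝ) → (Fin n → ℝ) → ℝ)
    (Ω : Set (Fin n → ℝ)) (u : (Fin n → ℝ) → ℝ) (x₀ : Fin n → ℝ) :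
    Set (Fin n → ℝ) :=
  {y | ∀ ε > (0 : ℝ), ∃ δ > (0 : ℝ), ∀ x ∈ Ω, ‖x - x₀‖ < δ →
        u x ≤ c x y - c x₀ y + u x₀ + ε * ‖x - x₀‖}

/-- `h = c(·, y₀) + a₀` is a local `c`-support of `u` at `x₀`:
`h(x₀) = u(x₀)` and `u ≤ h` on a neighbourhood of `x₀` in `Ω`. -/
def IsLocalCSupport {n : ℕ} (c : (Fin n → ℝ) → (Fin n → ℝ) → ℝ)
    (Ω : Set (Fin n → ℝ)) (u : (Fin n → ℝ) → ℝ) (x₀ y₀ : Fin n → ℝ)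
    (a₀ : ℝ) : Prop :=
  u x₀ = c x₀ y₀ + a₀ ∧
  ∃ δ > (0 : ℝ), ∀ x ∈ Ω, ‖x - x₀‖ < δ → u x ≤ c x y₀ + a₀

/-- `h = c(·, y₀) + a₀` is a global `c`-support of `u` at `x₀`:
`h(x₀) = u(x₀)` and `u ≤ h` on all of `Ω`. -/
def IsGlobalCSupport {n : ℕ} (c : (Fin n → ℝ) → (Fin n → ℝ) → ℝ)
    (Ω : Set (Fin n → ℝ)) (u : (Fin n → ℝ) → ℝ) (x₀ y₀ : Fin n → ℝ)
    (a₀ : ℝ) : Prop :=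
  u x₀ = c x₀ y₀ + a₀ ∧ ∀ x ∈ Ω, u x ≤ c x y₀ + a₀

/-- `u` is locally `c`-concave on `Ω`: for every `x₀` in the closure of `Ω` and
every `y ∈ ∂⁺_c u(x₀)`, the function `c(·,y) - c(x₀,y) + u(x₀)` is a local
`c`-support of `u` at `x₀`. -/
def LocallyCConcave {n : ℕ} (c : (Fin n → ℝ) → (Fin n → ℝ) → ℝ)
    (Ω : Set (Fin n → ℝ)) (u : (Fin n → ℝ) → ℝ) : Prop :=
  ∀ x₀ ∈ closure Ω, ∀ y ∈ cSuperGrad c Ω u x₀,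
    IsLocalCSupport c Ω u x₀ y (u x₀ - c x₀ y)

/-- `u` is fully `c`-concave on `Ω`: it is locally `c`-concave and every local
`c`-support is a global `c`-support. -/
def FullyCConcave {n : ℕ} (c : (Fin n → ℝ) → (Fin n → ℝ) → ℝ)
    (Ω : Set (Fin n → ℝ)) (u : (Fin n → ℝ) → ℝ) : Prop :=
  LocallyCConcave c Ω u ∧
  ∀ x₀ ∈ closure Ω, ∀ y₀ : Fin n → ℝ, ∀ a₀ : ℝ,
    IsLocalCSupport c Ω u x₀ y₀ a₀ → ∀ x ∈ Ω, u x ≤ c x y₀ + a₀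

/-- `u` is strictly `c`-concave on `Ω`: it is fully `c`-concave and every global
`c`-support touches the graph of `u` at exactly one point. -/
def StrictlyCConcave {n : ℕ} (c : (Fin n → ℝ) → (Fin n → ℝ) → ℝ)
    (Ω : Set (Fin n → ℝ)) (u : (Fin n → ℝ) → ℝ) : Prop :=
  FullyCConcave c Ω u ∧
  ∀ x₀ ∈ closure Ω, ∀ y₀ : Fin n → ℝ, ∀ a₀ : ℝ,
    IsGlobalCSupport c Ω u x₀ y₀ a₀ →
      {x ∈ closure Ω | u x = c x y₀ + a₀}.Subsingleton


/-!
Points of `Ω` lie in every `U_{y₀,y₁,a}` that contains `Ω`, so the content is that every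
`x₀ ∉ Ω` is cut off by one of these sets, i.e. there are `y₀, y₁` with
`c(x, y₀) - c(x, y₁) < c(x₀, y₀) - c(x₀, y₁)` for all `x ∈ Ω`. Such a pair is the pair of endpoints
of a short path `y(s)` in `Ω*` along which `s ↦ c(x₀, y(s)) - c(x, y(s))` strictly decreases for
every `x ∈ Ω`, that is, along which `y'(s)` is the normal of a hyperplane through
`D_y c(x₀, y(s))` that strictly separates it from the convex set `D_y c(Ω, y(s))`.

If `x₀ ∉ closure Ω`, Hahn–Banach separates `D_y c(x₀, y)` strictly from the compact convex set
`D_y c(closure Ω, y)`, and by compactness the same normal still separates along a short straight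
path starting at `y`.

If `x₀ ∈ ∂Ω`, the path is defined by `D_x c(x₀, y(s)) = D_x c(x₀, y) - s ∇φ(x₀)` (using (A1) and
(A2)). By the symmetry of the mixed second derivatives, the functional `u ↦ y'(s) · u` pulled back
by `D_x D_y c(x₀, y(s))` is `-dφ(x₀)`. Every hyperplane supporting the open convex set
`D_y c(Ω, y(s))` at `D_y c(x₀, y(s))` pulls back to a nonnegative multiple of `dφ(x₀)`, because `Ω`
contains the initial part of each ray from `x₀` in a direction `v` with `dφ(x₀) v < 0`.
-/

section

open Matrix Function

variable {n : ℕ}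

namespace ContinuousLinearMap

theorem apply_eq_dotProduct (g : (Fin n → ℝ) →L[ℝ] ℝ) (v : Fin n → ℝ) :
    g v = v ⬝ᵥ fun j => g (Pi.single j 1) := by
  conv_lhs => rw [← Finset.univ_sum_single v]
  simp only [map_sum, dotProduct]
  congr! with j
  rw [← smul_eq_mul, ← map_smul, ← Pi.single_smul, smul_eq_mul, mul_one]

theorem apply_nonpos_of_forall_neg {E : Type*} [NormedAddCommGroup E] [NormedSpace ℝ E]
    {g L : E →L[ℝ] ℝ} (hg : g ≠ 0) (h : ∀ v, g v < 0 → L v ≤ 0) {v : E} (hv : g v ≤ 0) :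
    L v ≤ 0 := by
  obtain ⟨u, hu⟩ : ∃ u, g u < 0 := by
    obtain ⟨u, hu⟩ := DFunLike.ne_iff.1 hg
    rcases (show g u ≠ 0 from hu).lt_or_gt with hneg | hpos
    · exact ⟨u, hneg⟩
    · exact ⟨-u, by simpa using hpos⟩
  have hlim : Tendsto (fun ε : ℝ => L (v + ε • u)) (𝓝[>] 0) (𝓝 (L v)) := by
    have : Continuous fun ε : ℝ => L (v + ε • u) := by fun_prop
    simpa using (this.tendsto 0).mono_left nhdsWithin_le_nhds
  refine le_of_tendsto hlim ?_
  filter_upwards [self_mem_nhdsWithin] with ε (hε : 0 < ε)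
  exact h _ (by simpa using add_neg_of_nonpos_of_neg hv (mul_neg_of_pos_of_neg hε hu))

end ContinuousLinearMap

section LocalDiffeo

variable {E : Type*} [NormedAddCommGroup E] [NormedSpace ℝ E] [FiniteDimensional ℝ E]
  {f : E → E} (hf : ContDiff ℝ 1 f) (hdet : ∀ x, (fderiv ℝ f x).det ≠ 0)
include hf hdet

theorem hasStrictFDerivAt_equiv_of_det_ne_zero (x : E) :
    HasStrictFDerivAt f
      (((fderiv ℝ f x).toContinuousLinearEquivOfDetNeZero (hdet x) : E ≃L[ℝ] E) : E →L[ℝ] E) x := by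
  simpa using hf.hasStrictFDerivAt one_ne_zero

theorem isOpenMap_of_det_ne_zero : IsOpenMap f :=
  isOpenMap_of_hasStrictFDerivAt_equiv (hasStrictFDerivAt_equiv_of_det_ne_zero hf hdet)

theorem differentiable_of_leftInverse_of_det_ne_zero {g : E → E} (hgf : LeftInverse g f)
    (hfg : RightInverse g f) : Differentiable ℝ g := fun z => by
  rw [← hfg z]
  exact ((hasStrictFDerivAt_equiv_of_det_ne_zero hf hdet (g z)).to_local_left_inverse
    (Eventually.of_forall hgf)).hasFDerivAt.differentiableAt

end LocalDiffeo

section Ray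

variable {E : Type*} [NormedAddCommGroup E] [NormedSpace ℝ E] {s Ω V : Set E} {φ : E → ℝ}
  {z v : E} {r t : ℝ}

theorem Convex.add_smul_mem_of_mem_Icc (hs : Convex ℝ s) (hz : z ∈ s) (hzt : z + t • v ∈ s)
    (hr : r ∈ Icc 0 t) : z + r • v ∈ s := by
  rcases hr.1.eq_or_lt with rfl | hr0
  · simpa using hz
  have ht : 0 < t := hr0.trans_le hr.2
  simpa [smul_smul, div_mul_cancel₀ r ht.ne'] using
    hs.add_smul_mem hz hzt ⟨div_nonneg hr.1 ht.le, div_le_one_of_le₀ hr.2 ht.le⟩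

theorem Convex.apply_add_smul_lt_of_fderiv_neg (hs : Convex ℝ s)
    (hφ : ∀ z ∈ s, DifferentiableAt ℝ φ z) (hv : ∀ z ∈ s, fderiv ℝ φ z v < 0) (hz : z ∈ s)
    (ht : 0 < t) (hzt : z + t • v ∈ s) : φ (z + t • v) < φ z := by
  have hmem (r : ℝ) (hr : r ∈ Icc 0 t) : z + r • v ∈ s := hs.add_smul_mem_of_mem_Icc hz hzt hr
  have hderiv (r : ℝ) (hr : r ∈ Icc 0 t) :
      HasDerivAt (fun r => φ (z + r • v)) (fderiv ℝ φ (z + r • v) v) r := by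
    have hline : HasDerivAt (fun r : ℝ => z + r • v) v r := by
      simpa using ((hasDerivAt_id r).smul_const v).const_add z
    exact (hφ _ (hmem r hr)).hasFDerivAt.comp_hasDerivAt r hline
  have hanti : StrictAntiOn (fun r => φ (z + r • v)) (Icc 0 t) :=
    strictAntiOn_of_deriv_neg (convex_Icc 0 t)
      (fun r hr => (hderiv r hr).continuousAt.continuousWithinAt) fun r hr => by
        rw [(hderiv r (interior_subset hr)).deriv]
        exact hv _ (hmem r (interior_subset hr))
  simpa using hanti (left_mem_Icc.2 ht.le) (right_mem_Icc.2 ht.le) ht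

theorem IsOpen.add_smul_mem_of_forall_neg (hΩo : IsOpen Ω) (hφ0 : ∀ x ∈ frontier Ω, φ x = 0)
    (hz : z ∈ Ω) (ht : 0 ≤ t) (hneg : ∀ r ∈ Icc 0 t, φ (z + r • v) < 0) : z + t • v ∈ Ω := by
  have hS : IsPreconnected ((fun r : ℝ => z + r • v) '' Icc 0 t) :=
    isPreconnected_Icc.image _ (by fun_prop)
  refine hS.subset_of_closure_inter_subset hΩo ⟨z, ⟨0, left_mem_Icc.2 ht, by simp⟩, hz⟩ ?_
    ⟨t, right_mem_Icc.2 ht, rfl⟩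
  rintro _ ⟨hcl, r, hr, rfl⟩
  by_contra h
  exact (hneg r hr).ne (hφ0 _ ⟨hcl, by rwa [hΩo.interior_eq]⟩)

theorem eventually_add_smul_mem_of_fderiv_neg (hΩo : IsOpen Ω) (hV : IsOpen V)
    (hφ : ContDiffOn ℝ 1 φ V) (hφneg : ∀ x ∈ Ω, φ x < 0) (hφ0 : ∀ x ∈ frontier Ω, φ x = 0)
    {x₀ : E} (hx₀ : x₀ ∈ frontier Ω) (hx₀V : x₀ ∈ V) (hv : fderiv ℝ φ x₀ v < 0) :
    ∀ᶠ t : ℝ in 𝓝[>] 0, x₀ + t • v ∈ Ω := by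
  obtain ⟨ρ, hρ, hB⟩ : ∃ ρ > 0, ∀ z ∈ Metric.ball x₀ ρ, z ∈ V ∧ fderiv ℝ φ z v < 0 := by
    refine Metric.eventually_nhds_iff_ball.1 ((hV.eventually_mem hx₀V).and ?_)
    exact (((hφ.continuousOn_fderiv_of_isOpen hV le_rfl).continuousAt
      (hV.mem_nhds hx₀V)).clm_apply continuousAt_const).eventually (gt_mem_nhds hv)
  set B := Metric.ball x₀ ρ
  have hdecr {z : E} {t : ℝ} (hz : z ∈ B) (ht : 0 < t) (hzt : z + t • v ∈ B) :
      φ (z + t • v) < φ z :=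
    (convex_ball x₀ ρ).apply_add_smul_lt_of_fderiv_neg
      (fun z hz => (hφ.differentiableOn one_ne_zero).differentiableAt (hV.mem_nhds (hB z hz).1))
      (fun z hz => (hB z hz).2) hz ht hzt
  have hstay (z : E) (hzΩ : z ∈ Ω) (hzB : z ∈ B) (t : ℝ) (ht : 0 < t) (hztB : z + t • v ∈ B) :
      z + t • v ∈ Ω := by
    refine hΩo.add_smul_mem_of_forall_neg hφ0 hzΩ ht.le fun r hr => ?_
    rcases hr.1.eq_or_lt with rfl | hr0
    · simpa using hφneg z hzΩ
    · exact (hdecr hzB hr0 ((convex_ball x₀ ρ).add_smul_mem_of_mem_Icc hzB hztB hr)).trans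
        (hφneg z hzΩ)
  have hev : ∀ᶠ t in 𝓝 (0 : ℝ), x₀ + t • v ∈ B :=
    (show Continuous fun t : ℝ => x₀ + t • v by fun_prop).continuousAt.preimage_mem_nhds
      (by simpa using Metric.ball_mem_nhds x₀ hρ)
  filter_upwards [self_mem_nhdsWithin, nhdsWithin_le_nhds hev] with t (ht : 0 < t) htB
  have hcl : x₀ + t • v ∈ closure Ω := by
    have hU : IsOpen (B ∩ (· + t • v) ⁻¹' B) :=
      Metric.isOpen_ball.inter (Metric.isOpen_ball.preimage (by fun_prop))
    exact map_mem_closure (f := (· + t • v)) (continuous_add_const (t • v))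
      (hU.inter_closure ⟨⟨Metric.mem_ball_self hρ, htB⟩, frontier_subset_closure hx₀⟩)
      fun z ⟨⟨hzB, hztB⟩, hzΩ⟩ => hstay z hzΩ hzB t ht hztB
  have hφt : φ (x₀ + t • v) < 0 := by
    simpa [hφ0 x₀ hx₀] using hdecr (Metric.mem_ball_self hρ) ht htB
  by_contra h
  exact hφt.ne (hφ0 _ ⟨hcl, by rwa [hΩo.interior_eq]⟩)

end Ray

namespace SmoothCost

variable {c : (Fin n → ℝ) → (Fin n → ℝ) → ℝ} (hc : SmoothCost c)
include hc

theorem contDiff : ContDiff ℝ (⊤ : ℕ∞) (uncurry c) := hc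

theorem contDiff_fderiv : ContDiff ℝ (⊤ : ℕ∞) (fderiv ℝ (uncurry c)) :=
  hc.contDiff.fderiv_right (m := (⊤ : ℕ∞)) (by simp)

theorem isSymmSndFDerivAt (p : (Fin n → ℝ) × (Fin n → ℝ)) : IsSymmSndFDerivAt ℝ (uncurry c) p :=
  hc.contDiff.contDiffAt.isSymmSndFDerivAt (by
    simp only [minSmoothness_of_isRCLikeNormedField]
    exact WithTop.coe_le_coe.2 le_top)

theorem hasFDerivAt_right (x y : Fin n → ℝ) :
    HasFDerivAt (c x) ((fderiv ℝ (uncurry c) (x, y)).comp (.inr ℝ _ _)) y :=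
  (hc.contDiff.differentiable (by simp) (x, y)).hasFDerivAt.comp y
    (hasFDerivAt_prodMk_right x y)

theorem hasFDerivAt_left (x y : Fin n → ℝ) :
    HasFDerivAt (fun x' => c x' y) ((fderiv ℝ (uncurry c) (x, y)).comp (.inl ℝ _ _)) x :=
  (hc.contDiff.differentiable (by simp) (x, y)).hasFDerivAt.comp (f := fun x' => (x', y)) x
    (hasFDerivAt_prodMk_left x y)

theorem Dy_eq (x y : Fin n → ℝ) :
    Dy c x y = fun j => fderiv ℝ (uncurry c) (x, y) (0, Pi.single j 1) := by
  ext j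
  simp [Dy, pd, (hc.hasFDerivAt_right x y).fderiv]

theorem Dx_eq (x y : Fin n → ℝ) :
    Dx c x y = fun i => fderiv ℝ (uncurry c) (x, y) (Pi.single i 1, 0) := by
  ext i
  simp [Dx, pd, (hc.hasFDerivAt_left x y).fderiv]

theorem contDiff_Dy : ContDiff ℝ (⊤ : ℕ∞) (uncurry (Dy c)) := by
  rw [show uncurry (Dy c) = fun p j => fderiv ℝ (uncurry c) p (0, Pi.single j 1) by
    ext ⟨x, y⟩ j; simp [hc.Dy_eq]]
  exact contDiff_pi.2 fun j => hc.contDiff_fderiv.clm_apply contDiff_const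

theorem contDiff_Dx : ContDiff ℝ (⊤ : ℕ∞) (uncurry (Dx c)) := by
  rw [show uncurry (Dx c) = fun p i => fderiv ℝ (uncurry c) p (Pi.single i 1, 0) by
    ext ⟨x, y⟩ i; simp [hc.Dx_eq]]
  exact contDiff_pi.2 fun i => hc.contDiff_fderiv.clm_apply contDiff_const

theorem contDiff_Dy_left (y : Fin n → ℝ) : ContDiff ℝ 1 (fun x => Dy c x y) :=
  (hc.contDiff_Dy.comp (contDiff_id.prodMk contDiff_const)).of_le (by simp)

theorem contDiff_Dx_right (x : Fin n → ℝ) : ContDiff ℝ 1 (Dx c x) :=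
  (hc.contDiff_Dx.comp (contDiff_const.prodMk contDiff_id)).of_le (by simp)

theorem hasDerivAt_comp (x : Fin n → ℝ) {α : ℝ → Fin n → ℝ} {w : Fin n → ℝ} {s : ℝ}
    (hα : HasDerivAt α w s) : HasDerivAt (fun t => c x (α t)) (w ⬝ᵥ Dy c x (α s)) s := by
  have h := (hc.hasFDerivAt_right x (α s)).comp_hasDerivAt s hα
  rwa [ContinuousLinearMap.apply_eq_dotProduct, ← (hc.hasFDerivAt_right x (α s)).fderiv] at h

theorem hasFDerivAt_fderiv_apply_left (x y : Fin n → ℝ) (u : (Fin n → ℝ) × (Fin n → ℝ)) :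
    HasFDerivAt (fun x' => fderiv ℝ (uncurry c) (x', y) u)
      (((fderiv ℝ (fderiv ℝ (uncurry c)) (x, y)).flip u).comp (.inl ℝ _ _)) x := by
  refine ((((hc.contDiff_fderiv.differentiable (by simp) (x, y)).hasFDerivAt).comp
    (f := fun x' => (x', y)) x (hasFDerivAt_prodMk_left x y)).clm_apply
    (hasFDerivAt_const u x)).congr_fderiv ?_
  ext; simp

theorem hasFDerivAt_fderiv_apply_right (x y : Fin n → ℝ) (u : (Fin n → ℝ) × (Fin n → ℝ)) :
    HasFDerivAt (fun y' => fderiv ℝ (uncurry c) (x, y') u)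
      (((fderiv ℝ (fderiv ℝ (uncurry c)) (x, y)).flip u).comp (.inr ℝ _ _)) y := by
  refine ((((hc.contDiff_fderiv.differentiable (by simp) (x, y)).hasFDerivAt).comp
    (f := fun y' => (x, y')) y (hasFDerivAt_prodMk_right x y)).clm_apply
    (hasFDerivAt_const u y)).congr_fderiv ?_
  ext; simp

theorem fderiv_Dy_apply (x y v : Fin n → ℝ) :
    fderiv ℝ (fun x' => Dy c x' y) x v =
      fun j => fderiv ℝ (fderiv ℝ (uncurry c)) (x, y) (v, 0) (0, Pi.single j 1) := by
  ext j
  simp_rw [hc.Dy_eq]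
  rw [fderiv_pi fun j => (hc.hasFDerivAt_fderiv_apply_left x y _).differentiableAt]
  simp [(hc.hasFDerivAt_fderiv_apply_left x y _).fderiv]

theorem fderiv_Dx_apply (x y w : Fin n → ℝ) :
    fderiv ℝ (Dx c x) y w =
      fun i => fderiv ℝ (fderiv ℝ (uncurry c)) (x, y) (0, w) (Pi.single i 1, 0) := by
  ext i
  rw [show Dx c x = fun y' i => fderiv ℝ (uncurry c) (x, y') (Pi.single i 1, 0) by
    ext y' i; simp [hc.Dx_eq]]
  rw [fderiv_pi fun i => (hc.hasFDerivAt_fderiv_apply_right x y _).differentiableAt]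
  simp [(hc.hasFDerivAt_fderiv_apply_right x y _).fderiv]

theorem fderiv_Dy_dotProduct (x y v w : Fin n → ℝ) :
    fderiv ℝ (fun x' => Dy c x' y) x v ⬝ᵥ w = fderiv ℝ (Dx c x) y w ⬝ᵥ v := by
  set B := fderiv ℝ (fderiv ℝ (uncurry c)) (x, y)
  have hl : B (v, 0) (0, w) = w ⬝ᵥ fun j => B (v, 0) (0, Pi.single j 1) := by
    simpa using ((B (v, 0)).comp (.inr ℝ _ _)).apply_eq_dotProduct w
  have hr : B (0, w) (v, 0) = v ⬝ᵥ fun i => B (0, w) (Pi.single i 1, 0) := by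
    simpa using ((B (0, w)).comp (.inl ℝ _ _)).apply_eq_dotProduct v
  rw [dotProduct_comm, dotProduct_comm _ v, hc.fderiv_Dy_apply, hc.fderiv_Dx_apply, ← hl, ← hr]
  exact hc.isSymmSndFDerivAt (x, y) _ _

theorem mixHess_eq_toMatrix' (x y : Fin n → ℝ) :
    mixHess c x y = LinearMap.toMatrix' (fderiv ℝ (Dx c x) y : (Fin n → ℝ) →ₗ[ℝ] Fin n → ℝ) := by
  ext i j
  have h : (fun y' => Dx c x y' i) = fun y' => fderiv ℝ (uncurry c) (x, y') (Pi.single i 1, 0) := by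
    ext y'; simp [hc.Dx_eq]
  simp [mixHess, pd, h, (hc.hasFDerivAt_fderiv_apply_right x y _).fderiv, hc.fderiv_Dx_apply]

theorem det_fderiv_Dx (x y : Fin n → ℝ) : (fderiv ℝ (Dx c x) y).det = (mixHess c x y).det := by
  rw [hc.mixHess_eq_toMatrix', LinearMap.det_toMatrix']

theorem det_fderiv_Dy (x y : Fin n → ℝ) :
    (fderiv ℝ (fun x' => Dy c x' y) x).det = (mixHess c x y).det := by
  have h : LinearMap.toMatrix' (fderiv ℝ (fun x' => Dy c x' y) x : (Fin n → ℝ) →ₗ[ℝ] Fin n → ℝ)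
      = (mixHess c x y)ᵀ := by
    ext j i
    have := hc.fderiv_Dy_dotProduct x y (Pi.single i 1) (Pi.single j 1)
    simp only [dotProduct_single, mul_one] at this
    simp [hc.mixHess_eq_toMatrix', LinearMap.toMatrix'_apply, this]
  rw [← det_transpose, ← h, LinearMap.det_toMatrix']

theorem isOpenMap_Dy (hA2 : A2 c) (y : Fin n → ℝ) : IsOpenMap (fun x => Dy c x y) :=
  isOpenMap_of_det_ne_zero (hc.contDiff_Dy_left y) fun x => hc.det_fderiv_Dy x y ▸ hA2 x y

end SmoothCost

theorem A1.injective_Dy {c : (Fin n → ℝ) → (Fin n → ℝ) → ℝ} (hA1 : A1 c) (y : Fin n → ℝ) :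
    Injective (fun x => Dy c x y) :=
  fun _ _ h => (hA1.2 y _).unique h rfl

section CutOff

variable {c : (Fin n → ℝ) → (Fin n → ℝ) → ℝ} {Ω Ωs : Set (Fin n → ℝ)} {x₀ : Fin n → ℝ}

theorem exists_sub_lt_of_path (hc : SmoothCost c) {α : ℝ → Fin n → ℝ} (hα : Differentiable ℝ α)
    (h : ∀ᶠ s in 𝓝[≥] 0, α s ∈ Ωs ∧
      ∀ x ∈ Ω, deriv α s ⬝ᵥ (Dy c x₀ (α s) - Dy c x (α s)) < 0) :
    ∃ y₀ ∈ closure Ωs, ∃ y₁ ∈ closure Ωs, ∀ x ∈ Ω, c x y₀ - c x y₁ < c x₀ y₀ - c x₀ y₁ := by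
  obtain ⟨σ, hσ, hσh⟩ := mem_nhdsGE_iff_exists_Icc_subset.1 h
  have h0 : (0 : ℝ) ∈ Icc 0 σ := left_mem_Icc.2 hσ.le
  have hσ' : σ ∈ Icc 0 σ := right_mem_Icc.2 hσ.le
  refine ⟨α 0, subset_closure (hσh h0).1, α σ, subset_closure (hσh hσ').1, fun x hx => ?_⟩
  have hψ (s : ℝ) : HasDerivAt (fun t => c x₀ (α t) - c x (α t))
      (deriv α s ⬝ᵥ (Dy c x₀ (α s) - Dy c x (α s))) s := by
    rw [dotProduct_sub]
    exact (hc.hasDerivAt_comp x₀ (hα s).hasDerivAt).sub (hc.hasDerivAt_comp x (hα s).hasDerivAt)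
  have hanti : StrictAntiOn (fun t => c x₀ (α t) - c x (α t)) (Icc 0 σ) :=
    strictAntiOn_of_deriv_neg (convex_Icc 0 σ) (fun s _ => (hψ s).continuousAt.continuousWithinAt)
      fun s hs => (hψ s).deriv ▸ (hσh (interior_subset hs)).2 x hx
  linarith [hanti h0 hσ' hσ]

theorem exists_sub_lt_of_notMem_closure (hc : SmoothCost c) (hA1 : A1 c)
    (hΩb : Bornology.IsBounded Ω) (hΩso : IsOpen Ωs) {y : Fin n → ℝ} (hy : y ∈ Ωs)
    (hconv : Convex ℝ ((fun x => Dy c x y) '' Ω)) (hx₀ : x₀ ∉ closure Ω) :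
    ∃ y₀ ∈ closure Ωs, ∃ y₁ ∈ closure Ωs, ∀ x ∈ Ω, c x y₀ - c x y₁ < c x₀ y₀ - c x₀ y₁ := by
  have hK : IsCompact (closure Ω) := hΩb.isCompact_closure
  have hDy : Continuous (uncurry (Dy c)) := hc.contDiff_Dy.continuous
  have himage : (fun x => Dy c x y) '' closure Ω = closure ((fun x => Dy c x y) '' Ω) :=
    image_closure_of_isCompact hK (hDy.comp (continuous_id.prodMk continuous_const)).continuousOn
  have hz₀ : Dy c x₀ y ∉ (fun x => Dy c x y) '' closure Ω :=
    (hA1.injective_Dy y).mem_set_image.not.2 hx₀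
  obtain ⟨f, u, hfu, hu⟩ := geometric_hahn_banach_closed_point (himage ▸ hconv.closure)
    (himage ▸ isClosed_closure) hz₀
  set w : Fin n → ℝ := fun j => f (Pi.single j 1)
  have hline : Continuous fun s : ℝ => y - s • w := by fun_prop
  have hsep : ∀ᶠ s in 𝓝 (0 : ℝ), ∀ x ∈ closure Ω,
      0 < f (Dy c x₀ (y - s • w) - Dy c x (y - s • w)) := by
    refine hK.eventually_forall_of_forall_eventually fun x hx => ?_
    have hcont : Continuous fun p : ℝ × (Fin n → ℝ) =>
        f (Dy c x₀ (y - p.1 • w) - Dy c p.2 (y - p.1 • w)) :=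
      f.continuous.comp ((hDy.comp (continuous_const.prodMk (hline.comp continuous_fst))).sub
        (hDy.comp (continuous_snd.prodMk (hline.comp continuous_fst))))
    refine hcont.continuousAt.eventually (lt_mem_nhds ?_)
    simp only [zero_smul, sub_zero, map_sub]
    linarith [hfu _ (mem_image_of_mem _ hx)]
  have hmem : ∀ᶠ s in 𝓝 (0 : ℝ), y - s • w ∈ Ωs :=
    hline.continuousAt.preimage_mem_nhds (by simpa using hΩso.mem_nhds hy)
  refine exists_sub_lt_of_path hc (α := fun s => y - s • w) (by fun_prop) ?_
  filter_upwards [nhdsWithin_le_nhds (hsep.and hmem)] with s ⟨hs, hsΩs⟩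
  refine ⟨hsΩs, fun x hx => ?_⟩
  have hderiv : deriv (fun s => y - s • w) s = -w := by
    simpa using ((hasDerivAt_id s).smul_const w).const_sub y |>.deriv
  rw [hderiv, neg_dotProduct, dotProduct_comm, ← ContinuousLinearMap.apply_eq_dotProduct]
  linarith [hs x (subset_closure hx)]

theorem dotProduct_sub_neg_of_forall_mem_posTangentConeAt (hc : SmoothCost c) (hA1 : A1 c)
    (hA2 : A2 c) (hΩo : IsOpen Ω) {y : Fin n → ℝ} (hconv : Convex ℝ ((fun x => Dy c x y) '' Ω))
    (hx₀ : x₀ ∉ Ω) {g : (Fin n → ℝ) →L[ℝ] ℝ} (hg : g ≠ 0)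
    (hcone : ∀ v, g v < 0 → v ∈ posTangentConeAt Ω x₀) {W : Fin n → ℝ}
    (hW : ∀ v, fderiv ℝ (Dx c x₀) y W ⬝ᵥ v = -g v) :
    ∀ x ∈ Ω, W ⬝ᵥ (Dy c x₀ y - Dy c x y) < 0 := by
  set T := fderiv ℝ (fun x => Dy c x y) x₀
  obtain ⟨f, hf⟩ := geometric_hahn_banach_open_point hconv (hc.isOpenMap_Dy hA2 y Ω hΩo)
    ((hA1.injective_Dy y).mem_set_image.not.2 hx₀)
  have hmax : IsLocalMaxOn (fun x => f (Dy c x y)) Ω x₀ :=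
    IsMaxOn.localize fun x hx => (hf _ (mem_image_of_mem _ hx)).le
  have hderiv : HasFDerivAt (fun x => f (Dy c x y)) (f.comp T) x₀ :=
    f.hasFDerivAt.comp x₀ ((hc.contDiff_Dy_left y).differentiable one_ne_zero x₀).hasFDerivAt
  have hfT (v : Fin n → ℝ) (hv : g v ≤ 0) : f (T v) ≤ 0 :=
    ContinuousLinearMap.apply_nonpos_of_forall_neg (L := f.comp T) hg
      (fun v hv => hmax.hasFDerivWithinAt_nonpos hderiv.hasFDerivWithinAt (hcone v hv)) hv
  intro x hx
  obtain ⟨v, hv⟩ : ∃ v, T v = Dy c x₀ y - Dy c x y :=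
    ((fderiv ℝ _ x₀).toContinuousLinearEquivOfDetNeZero
      (hc.det_fderiv_Dy x₀ y ▸ hA2 x₀ y)).surjective _
  have hfv : 0 < f (T v) := by
    rw [hv, map_sub]
    linarith [hf _ (mem_image_of_mem _ hx)]
  have hgv : 0 < g v := lt_of_not_ge fun h => (hfT v h).not_gt hfv
  rw [← hv, dotProduct_comm, hc.fderiv_Dy_dotProduct, hW]
  linarith

theorem exists_sub_lt_of_forall_mem_posTangentConeAt (hc : SmoothCost c) (hA1 : A1 c)
    (hA2 : A2 c) (hΩo : IsOpen Ω) (hΩso : IsOpen Ωs)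
    (hconv : ∀ y ∈ Ωs, Convex ℝ ((fun x => Dy c x y) '' Ω)) {y : Fin n → ℝ} (hy : y ∈ Ωs)
    (hx₀ : x₀ ∉ Ω) {g : (Fin n → ℝ) →L[ℝ] ℝ} (hg : g ≠ 0)
    (hcone : ∀ v, g v < 0 → v ∈ posTangentConeAt Ω x₀) :
    ∃ y₀ ∈ closure Ωs, ∃ y₁ ∈ closure Ωs, ∀ x ∈ Ω, c x y₀ - c x y₁ < c x₀ y₀ - c x₀ y₁ := by
  set γ : Fin n → ℝ := fun j => g (Pi.single j 1)
  set e := Equiv.ofBijective (Dx c x₀) ⟨fun y₁ y₂ h => (hA1.1 x₀ _).unique h rfl,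
    fun z => (hA1.1 x₀ z).exists⟩
  set α : ℝ → Fin n → ℝ := fun s => e.symm (Dx c x₀ y - s • γ)
  have hα : Differentiable ℝ α :=
    (differentiable_of_leftInverse_of_det_ne_zero (hc.contDiff_Dx_right x₀)
      (fun y => hc.det_fderiv_Dx x₀ y ▸ hA2 x₀ y) e.left_inv e.right_inv).comp (by fun_prop)
  have hα0 : α 0 = y := by
    simp only [α, zero_smul, sub_zero]
    exact e.symm_apply_apply y
  have hW (s : ℝ) : fderiv ℝ (Dx c x₀) (α s) (deriv α s) = -γ := by
    have h₁ : HasDerivAt (fun s => Dx c x₀ (α s)) (fderiv ℝ (Dx c x₀) (α s) (deriv α s)) s :=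
      ((hc.contDiff_Dx_right x₀).differentiable one_ne_zero (α s)).hasFDerivAt.comp_hasDerivAt s
        (hα s).hasDerivAt
    have h₂ : HasDerivAt (fun s => Dx c x₀ (α s)) (-γ) s := by
      rw [show (fun s => Dx c x₀ (α s)) = fun s => Dx c x₀ y - s • γ from
        funext fun s => e.apply_symm_apply _]
      simpa using ((hasDerivAt_id s).smul_const γ).const_sub (Dx c x₀ y)
    exact h₁.unique h₂
  have hαΩs : ∀ᶠ s in 𝓝 0, α s ∈ Ωs :=
    hα.continuous.continuousAt.preimage_mem_nhds (hα0 ▸ hΩso.mem_nhds hy)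
  refine exists_sub_lt_of_path hc hα ?_
  filter_upwards [nhdsWithin_le_nhds hαΩs] with s hs
  refine ⟨hs, dotProduct_sub_neg_of_forall_mem_posTangentConeAt hc hA1 hA2 hΩo (hconv _ hs) hx₀
    hg hcone fun v => ?_⟩
  rw [hW s, neg_dotProduct, dotProduct_comm, ← ContinuousLinearMap.apply_eq_dotProduct]

end CutOff

end

theorem statement11_general
    {n : ℕ}
    (c : (Fin n → ℝ) → (Fin n → ℝ) → ℝ)
    (hc : SmoothCost c) (hA1 : A1 c) (hA2 : A2 c)
    (Ω Ωs : Set (Fin n → ℝ))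
    (hΩo : IsOpen Ω) (hΩb : Bornology.IsBounded Ω)
    (hΩso : IsOpen Ωs) (hΩsconn : IsConnected Ωs)
    (φ : (Fin n → ℝ) → ℝ) (V : Set (Fin n → ℝ)) (hV : IsOpen V)
    (hclV : closure Ω ⊆ V) (hφC2 : ContDiffOn ℝ 2 φ V)
    (hφneg : ∀ x ∈ Ω, φ x < 0)
    (hφ0 : ∀ x ∈ frontier Ω, φ x = 0)
    (hφgrad : ∀ x ∈ frontier Ω, fderiv ℝ φ x ≠ 0)
    (hconv : ∀ y ∈ Ωs, Convex ℝ ((fun x => Dy c x y) '' Ω)) :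
    Ω = ⋂₀ {U : Set (Fin n → ℝ) |
      ∃ y₀ ∈ closure Ωs, ∃ y₁ ∈ closure Ωs, ∃ a : ℝ,
        U = {x : Fin n → ℝ | c x y₀ < c x y₁ + a} ∧ Ω ⊆ U} := by
  refine Subset.antisymm (fun x hx => mem_sInter.2 fun U ⟨_, _, _, _, _, _, hΩU⟩ => hΩU hx)
    fun x₀ hx₀ => by_contra fun hx₀Ω => ?_
  obtain ⟨y, hy⟩ := hΩsconn.nonempty
  obtain ⟨y₀, hy₀, y₁, hy₁, hcut⟩ : ∃ y₀ ∈ closure Ωs, ∃ y₁ ∈ closure Ωs,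
      ∀ x ∈ Ω, c x y₀ - c x y₁ < c x₀ y₀ - c x₀ y₁ := by
    by_cases hcl : x₀ ∈ closure Ω
    · have hfr : x₀ ∈ frontier Ω := ⟨hcl, by rwa [hΩo.interior_eq]⟩
      refine exists_sub_lt_of_forall_mem_posTangentConeAt hc hA1 hA2 hΩo hΩso hconv hy hx₀Ω
        (hφgrad x₀ hfr) fun v hv => mem_posTangentConeAt_of_frequently_mem ?_
      exact (eventually_add_smul_mem_of_fderiv_neg hΩo hV (hφC2.of_le one_le_two) hφneg hφ0 hfr
        (hclV hcl) hv).frequently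
    · exact exists_sub_lt_of_notMem_closure hc hA1 hΩb hΩso hy (hconv y hy) hcl
  have hx₀U : c x₀ y₀ < c x₀ y₁ + (c x₀ y₀ - c x₀ y₁) :=
    mem_sInter.1 hx₀ _ ⟨y₀, hy₀, y₁, hy₁, _, rfl, fun x hx =>
      show c x y₀ < c x y₁ + (c x₀ y₀ - c x₀ y₁) by linarith [hcut x hx]⟩
  linarith

/-- Formula (2.24): a `c`-convex domain is the intersection of all the sets
`U_{y₀,y₁,a} = {c(·,y₀) < c(·,y₁) + a}` containing it. -/
theorem statement11
    {n : ℕ} (hn : 2 ≤ n)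
    (c : (Fin n → ℝ) → (Fin n → ℝ) → ℝ)
    (hc : SmoothCost c) (hA1 : A1 c) (hA2 : A2 c)
    (c₀ : ℝ) (hc₀ : 0 < c₀)
    (hA3 : ∀ x y : Fin n → ℝ, A3at c c₀ x y)
    (Ω Ωs : Set (Fin n → ℝ))
    (hΩo : IsOpen Ω) (hΩconn : IsConnected Ω) (hΩb : Bornology.IsBounded Ω)
    (hΩso : IsOpen Ωs) (hΩsconn : IsConnected Ωs) (hΩsb : Bornology.IsBounded Ωs)
    (φ : (Fin n → ℝ) → ℝ) (V : Set (Fin n → ℝ)) (hV : IsOpen V)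
    (hclV : closure Ω ⊆ V) (hφC2 : ContDiffOn ℝ 2 φ V)
    (hφneg : ∀ x ∈ Ω, φ x < 0)
    (hφ0 : ∀ x ∈ frontier Ω, φ x = 0)
    (hφgrad : ∀ x ∈ frontier Ω, fderiv ℝ φ x ≠ 0)
    (hconv : ∀ y ∈ Ωs, Convex ℝ ((fun x => Dy c x y) '' Ω)) :
    Ω = ⋂₀ {U : Set (Fin n → ℝ) |
      ∃ y₀ ∈ closure Ωs, ∃ y₁ ∈ closure Ωs, ∃ a : ℝ,
        U = {x : Fin n → ℝ | c x y₀ < c x y₁ + a} ∧ Ω ⊆ U} :=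
  statement11_general c hc hA1 hA2 Ω Ωs hΩo hΩb hΩso hΩsconn φ V hV hclV hφC2 hφneg hφ0 hφgrad hconv
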